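/- Let K be a field of characteristic zero, let η ∈ K be nonzero with η ≠ 1, and let A = A_η = A(1+η, −η, 1) with α = 1+η. Set ε = (α−2)⁻¹, φ = −2(α−2)⁻¹ and w = −ud + du + ε in A. Then for all n ≥ 1, d·u^{2n} = u^{2n}·d + nφ·u^{2n−1} + α·(Σ_{i=0}^{n−1} η^{−2i−1})·w·u^{2n−1}, and for all n ≥ 0, d·u^{2n+1} = u^{2n+1}·d + u^{2n}·w + (nφ − ε)·u^{2n} + α·(Σ_{i=0}^{n−1} η^{−1−2i})·w·u^{2n}. -/

import Mathlib

/-!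
With `w = du - ud + ε`, the relation `du² = α·udu + β·u²d + γ·u` becomes `w·u = η·u·w` exactly
when `α + β = 1` and `γ + ε = (α - 1)·ε`; so `u` skew-commutes with `w`, and `du = ud + w - ε`.
Pushing `d` through `u^(n+1)` one factor at a time and moving every `w` to the left gives
`d·u^(n+1) = u^(n+1)·d + (Σ_{k ≤ n} η^(-k))·w·u^n - (n+1)ε·u^n`. The two formulas are its even
and odd cases, once the geometric sum is regrouped in pairs `η^(-2i) + η^(-2i-1) = (1+η)·η^(-2i-1)`.
-/

universe u

noncomputable section

/-- The defining relations `d²u = α·dud + β·ud² + γ·d` and `du² = α·udu + β·u²d + γ·u`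
of the down-up algebra `A(α,β,γ)`, as a relation on the free algebra on two generators
(`0 ↦ d`, `1 ↦ u`). -/
def duRel (K : Type u) [Field K] (α β γ : K) :
    FreeAlgebra K (Fin 2) → FreeAlgebra K (Fin 2) → Prop := fun X Y =>
  (X = FreeAlgebra.ι K (0 : Fin 2) * FreeAlgebra.ι K (0 : Fin 2) * FreeAlgebra.ι K (1 : Fin 2) ∧
   Y = α • (FreeAlgebra.ι K (0 : Fin 2) * FreeAlgebra.ι K (1 : Fin 2) * FreeAlgebra.ι K (0 : Fin 2)) +
       β • (FreeAlgebra.ι K (1 : Fin 2) * FreeAlgebra.ι K (0 : Fin 2) * FreeAlgebra.ι K (0 : Fin 2)) +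
       γ • FreeAlgebra.ι K (0 : Fin 2)) ∨
  (X = FreeAlgebra.ι K (0 : Fin 2) * FreeAlgebra.ι K (1 : Fin 2) * FreeAlgebra.ι K (1 : Fin 2) ∧
   Y = α • (FreeAlgebra.ι K (1 : Fin 2) * FreeAlgebra.ι K (0 : Fin 2) * FreeAlgebra.ι K (1 : Fin 2)) +
       β • (FreeAlgebra.ι K (1 : Fin 2) * FreeAlgebra.ι K (1 : Fin 2) * FreeAlgebra.ι K (0 : Fin 2)) +
       γ • FreeAlgebra.ι K (1 : Fin 2))

/-- The down-up algebra `A(α,β,γ)`. -/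
abbrev DownUp (K : Type u) [Field K] (α β γ : K) := RingQuot (duRel K α β γ)

/-- The generator `d` of the down-up algebra. -/
def duD (K : Type u) [Field K] (α β γ : K) : DownUp K α β γ :=
  RingQuot.mkAlgHom K (duRel K α β γ) (FreeAlgebra.ι K (0 : Fin 2))

/-- The generator `u` of the down-up algebra. -/
def duU (K : Type u) [Field K] (α β γ : K) : DownUp K α β γ :=
  RingQuot.mkAlgHom K (duRel K α β γ) (FreeAlgebra.ι K (1 : Fin 2))

open Finset

section SkewCommuting

variable {R A : Type*} [CommRing R] [Ring A] [Algebra R A]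

theorem pow_mul_eq_smul_mul_pow {u w : A} {c : R} (h : u * w = c • (w * u)) (k : ℕ) :
    u ^ k * w = c ^ k • (w * u ^ k) := by
  induction k with
  | zero => simp
  | succ k ih =>
    rw [pow_succ', mul_assoc, ih, mul_smul_comm, ← mul_assoc, h, smul_mul_assoc, smul_smul,
      mul_assoc, ← pow_succ', ← pow_succ]

theorem mul_pow_succ_eq_of_mul_eq {d u w : A} {c s : R}
    (hdu : d * u = u * d + w + algebraMap R A s) (huw : u * w = c • (w * u)) (n : ℕ) :
    d * u ^ (n + 1) =
      u ^ (n + 1) * d + (∑ k ∈ range (n + 1), c ^ k) • (w * u ^ n) + ((n + 1 : R) * s) • u ^ n := by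
  induction n with
  | zero => simpa [Algebra.algebraMap_eq_smul_one] using hdu
  | succ n ih =>
    calc d * u ^ (n + 2) = (d * u) * u ^ (n + 1) := by rw [pow_succ' u (n + 1), mul_assoc]
      _ = u * (d * u ^ (n + 1)) + w * u ^ (n + 1) + s • u ^ (n + 1) := by
        rw [hdu, Algebra.algebraMap_eq_smul_one]; noncomm_ring
      _ = _ := by
        rw [ih, geom_sum_succ (n := n + 1)]
        simp only [mul_add, mul_smul_comm, ← mul_assoc, huw, ← pow_succ']
        rw [smul_mul_assoc, mul_assoc, ← pow_succ']
        push_cast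
        module

end SkewCommuting

theorem geom_sum_two_mul {R : Type*} [CommSemiring R] (x : R) (n : ℕ) :
    ∑ k ∈ range (2 * n), x ^ k = (1 + x) * ∑ i ∈ range n, x ^ (2 * i) := by
  induction n with
  | zero => simp
  | succ n ih =>
    rw [Nat.mul_succ, sum_range_succ, sum_range_succ, ih, sum_range_succ]
    ring

theorem one_add_mul_sum_inv_pow_odd {K : Type*} [Field K] {η : K} (hη : η ≠ 0) (n : ℕ) :
    (1 + η) * ∑ i ∈ range n, η⁻¹ ^ (2 * i + 1) = ∑ k ∈ range (2 * n), η⁻¹ ^ k := by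
  simp only [geom_sum_two_mul, pow_succ, ← sum_mul]
  field_simp
  ring

namespace DownUp

variable {K : Type u} [Field K] {α β γ : K}

theorem duD_mul_duU_sq :
    duD K α β γ * duU K α β γ ^ 2 =
      α • (duU K α β γ * duD K α β γ * duU K α β γ) + β • (duU K α β γ ^ 2 * duD K α β γ) +
        γ • duU K α β γ := by
  have h := RingQuot.mkAlgHom_rel K (s := duRel K α β γ) (Or.inr ⟨rfl, rfl⟩)
  simpa only [map_mul, map_add, map_smul, pow_two, mul_assoc, duD, duU] using h

theorem commutator_add_mul_duU (hαβ : α + β = 1) {ε : K} (hε : γ + ε = (α - 1) * ε) :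
    (duD K α β γ * duU K α β γ - duU K α β γ * duD K α β γ + algebraMap K _ ε) * duU K α β γ =
      (α - 1) • (duU K α β γ *
        (duD K α β γ * duU K α β γ - duU K α β γ * duD K α β γ + algebraMap K _ ε)) := by
  have hrel := duD_mul_duU_sq (α := α) (β := β) (γ := γ)
  simp only [pow_two, mul_assoc] at hrel
  simp only [add_mul, sub_mul, mul_add, mul_sub, mul_assoc, hrel, ← Algebra.commutes,
    ← Algebra.smul_def]
  match_scalars
  · ring
  · linear_combination hαβ
  · linear_combination hε

end DownUp

theorem downUp_du_power_formulas_general {K : Type u} [Field K]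
    (η : K) (hη0 : η ≠ 0) (hη1 : η ≠ 1) :
    (∀ n : ℕ, 1 ≤ n →
      duD K (1 + η) (-η) 1 * (duU K (1 + η) (-η) 1) ^ (2 * n) =
        (duU K (1 + η) (-η) 1) ^ (2 * n) * duD K (1 + η) (-η) 1 +
        ((n : K) * (-2 * ((1 + η) - 2)⁻¹)) • (duU K (1 + η) (-η) 1) ^ (2 * n - 1) +
        ((1 + η) * ∑ i ∈ Finset.range n, η⁻¹ ^ (2 * i + 1)) •
          ((-(duU K (1 + η) (-η) 1 * duD K (1 + η) (-η) 1) +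
              duD K (1 + η) (-η) 1 * duU K (1 + η) (-η) 1 +
              algebraMap K (DownUp K (1 + η) (-η) 1) (((1 + η) - 2)⁻¹)) *
            (duU K (1 + η) (-η) 1) ^ (2 * n - 1))) ∧
    (∀ n : ℕ,
      duD K (1 + η) (-η) 1 * (duU K (1 + η) (-η) 1) ^ (2 * n + 1) =
        (duU K (1 + η) (-η) 1) ^ (2 * n + 1) * duD K (1 + η) (-η) 1 +
        (duU K (1 + η) (-η) 1) ^ (2 * n) *
          (-(duU K (1 + η) (-η) 1 * duD K (1 + η) (-η) 1) +
            duD K (1 + η) (-η) 1 * duU K (1 + η) (-η) 1 +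
            algebraMap K (DownUp K (1 + η) (-η) 1) (((1 + η) - 2)⁻¹)) +
        ((n : K) * (-2 * ((1 + η) - 2)⁻¹) - ((1 + η) - 2)⁻¹) • (duU K (1 + η) (-η) 1) ^ (2 * n) +
        ((1 + η) * ∑ i ∈ Finset.range n, η⁻¹ ^ (1 + 2 * i)) •
          ((-(duU K (1 + η) (-η) 1 * duD K (1 + η) (-η) 1) +
              duD K (1 + η) (-η) 1 * duU K (1 + η) (-η) 1 +
              algebraMap K (DownUp K (1 + η) (-η) 1) (((1 + η) - 2)⁻¹)) *
            (duU K (1 + η) (-η) 1) ^ (2 * n))) := by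
  have hα : (1 + η) - 2 ≠ 0 := fun h => hη1 (by linear_combination h)
  set d := duD K (1 + η) (-η) 1
  set u := duU K (1 + η) (-η) 1
  set ε : K := ((1 + η) - 2)⁻¹
  set w := -(u * d) + d * u + algebraMap K (DownUp K (1 + η) (-η) 1) ε with hw
  have hwu : w * u = η • (u * w) := by
    have hε : 1 + ε = (1 + η - 1) * ε := by linear_combination -(mul_inv_cancel₀ hα)
    have h := DownUp.commutator_add_mul_duU (β := -η) (add_neg_cancel_right 1 η) hε
    rwa [add_sub_cancel_left, sub_eq_neg_add] at h
  have huw : u * w = η⁻¹ • (w * u) := by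
    rw [hwu, smul_smul, inv_mul_cancel₀ hη0, one_smul]
  have hdu : d * u = u * d + w + algebraMap K _ (-ε) := by
    rw [hw, map_neg]; abel
  have hdu_pow := mul_pow_succ_eq_of_mul_eq hdu huw
  refine ⟨fun n hn => ?_, fun n => ?_⟩
  · obtain ⟨m, rfl⟩ := Nat.exists_eq_add_of_le' hn
    rw [one_add_mul_sum_inv_pow_odd hη0, show 2 * (m + 1) - 1 = 2 * m + 1 by omega,
      show 2 * (m + 1) = 2 * m + 1 + 1 by ring, hdu_pow]
    push_cast
    module
  · simp only [Nat.add_comm 1]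
    rw [one_add_mul_sum_inv_pow_odd hη0, hdu_pow, pow_mul_eq_smul_mul_pow huw, geom_sum_succ']
    push_cast
    module

/-- Lemma 4.4: in `A_η = A(1+η, −η, 1)` with `α = 1+η`, `ε = (α−2)⁻¹`,
`φ = −2(α−2)⁻¹` and `w = −ud + du + ε`, for all `n ≥ 1`,
`d·u^{2n} = u^{2n}·d + nφ·u^{2n−1} + α·(Σ_{i=0}^{n−1} η^{−2i−1})·w·u^{2n−1}`, and for all
`n ≥ 0`,
`d·u^{2n+1} = u^{2n+1}·d + u^{2n}·w + (nφ − ε)·u^{2n} + α·(Σ_{i=0}^{n−1} η^{−1−2i})·w·u^{2n}`. -/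
theorem downUp_du_power_formulas {K : Type u} [Field K] [CharZero K]
    (η : K) (hη0 : η ≠ 0) (hη1 : η ≠ 1) :
    (∀ n : ℕ, 1 ≤ n →
      duD K (1 + η) (-η) 1 * (duU K (1 + η) (-η) 1) ^ (2 * n) =
        (duU K (1 + η) (-η) 1) ^ (2 * n) * duD K (1 + η) (-η) 1 +
        ((n : K) * (-2 * ((1 + η) - 2)⁻¹)) • (duU K (1 + η) (-η) 1) ^ (2 * n - 1) +
        ((1 + η) * ∑ i ∈ Finset.range n, η⁻¹ ^ (2 * i + 1)) •
          ((-(duU K (1 + η) (-η) 1 * duD K (1 + η) (-η) 1) +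
              duD K (1 + η) (-η) 1 * duU K (1 + η) (-η) 1 +
              algebraMap K (DownUp K (1 + η) (-η) 1) (((1 + η) - 2)⁻¹)) *
            (duU K (1 + η) (-η) 1) ^ (2 * n - 1))) ∧
    (∀ n : ℕ,
      duD K (1 + η) (-η) 1 * (duU K (1 + η) (-η) 1) ^ (2 * n + 1) =
        (duU K (1 + η) (-η) 1) ^ (2 * n + 1) * duD K (1 + η) (-η) 1 +
        (duU K (1 + η) (-η) 1) ^ (2 * n) *
          (-(duU K (1 + η) (-η) 1 * duD K (1 + η) (-η) 1) +
            duD K (1 + η) (-η) 1 * duU K (1 + η) (-η) 1 +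
            algebraMap K (DownUp K (1 + η) (-η) 1) (((1 + η) - 2)⁻¹)) +
        ((n : K) * (-2 * ((1 + η) - 2)⁻¹) - ((1 + η) - 2)⁻¹) • (duU K (1 + η) (-η) 1) ^ (2 * n) +
        ((1 + η) * ∑ i ∈ Finset.range n, η⁻¹ ^ (1 + 2 * i)) •
          ((-(duU K (1 + η) (-η) 1 * duD K (1 + η) (-η) 1) +
              duD K (1 + η) (-η) 1 * duU K (1 + η) (-η) 1 +
              algebraMap K (DownUp K (1 + η) (-η) 1) (((1 + η) - 2)⁻¹)) *
            (duU K (1 + η) (-η) 1) ^ (2 * n))) :=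
  downUp_du_power_formulas_general η hη0 hη1

end
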